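/- arXiv:2512.04807 — 3 statements merged into one kernel-verified Lean document; each statement's English description precedes it below -/
import Mathlib

section
/- Let (V, w) be a finite electrical network and let G be the graph on V whose edges are the pairs with positive conductance. Let x, y, z₁, …, z_N ∈ V with x ≠ y and x ∉ {z₁, …, z_N}, and suppose that {z₁, …, z_N} separates x from y in G, i.e., every path in G from x to y passes through some z_i. Let K_x be the network induced on the set of vertices of V that are not strictly separated from x by {z₁, …, z_N} (a vertex v ∉ {z₁, …, z_N} is strictly separated from x if every path in G from x to v passes through some z_i), with conductances given by the restriction of w. Then, with effective resistances taken with values in [0,∞] (and the convention that the reciprocal of ∞ is 0), one has R_G(x,y)^{-1} ≤ Σ_{i=1}^{N} R_{K_x}(x, z_i)^{-1}. -/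
open scoped Classical

/-- An edge conductance function on a set `V`: nonnegative, symmetric, vanishing on the
diagonal. -/
def IsConductance {V : Type*} (w : V → V → ℝ) : Prop :=
  (∀ x y, 0 ≤ w x y) ∧ (∀ x y, w x y = w y x) ∧ (∀ x, w x x = 0)

/-- The energy of a function `f : V → ℝ` with respect to edge conductances `w`. -/
noncomputable def energy {V : Type*} [Fintype V] (w : V → V → ℝ) (f : V → ℝ) : ℝ :=
  (1 / 2) * ∑ x, ∑ y, w x y * (f x - f y) ^ 2

/-- The effective resistance associated with the network `(V, w)`, with values in `[0, ∞]`
(with the convention `1/0 = ∞`). -/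
noncomputable def effResE {V : Type*} [Fintype V] (w : V → V → ℝ) (x y : V) : ENNReal :=
  if x = y then 0
  else (ENNReal.ofReal (sInf {e : ℝ | ∃ f : V → ℝ, f x = 1 ∧ f y = 0 ∧ energy w f = e}))⁻¹

/-- The graph on `V` whose edges are the pairs with positive conductance. -/
def netGraph {V : Type*} (w : V → V → ℝ) : SimpleGraph V :=
  SimpleGraph.fromRel (fun a b => 0 < w a b)

/-- A vertex `v ∉ {z₁, …, z_N}` is strictly separated from `x` by `{z₁, …, z_N}` if every path
in the graph of `w` from `x` to `v` passes through some `z i`. -/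
def StrictlySeparated {V : Type*} (w : V → V → ℝ) {N : ℕ} (z : Fin N → V) (x v : V) : Prop :=
  (∀ i, v ≠ z i) ∧ ∀ p : (netGraph w).Walk x v, ∃ i, z i ∈ p.support

/-!
Dirichlet principle: `R(x,y)⁻¹` is the least energy of a unit potential from `x` to `y`.
Given near-optimal unit potentials `fᵢ` from `x` to `zᵢ` in `K_x`, their pointwise minimum,
truncated to `[0,1]` and set to `0` on the vertices strictly separated from `x`, is a unit
potential from `x` to `y`. Truncation and minimum are contractions in each coordinate, so its
energy is at most `∑ᵢ E(fᵢ)`; cutting it off costs nothing, because a vertex of `K_x` adjacent to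
a strictly separated vertex is one of the `zᵢ`, where the potential already vanishes.
-/

open Finset

section Separation

variable {V : Type*} {w : V → V → ℝ} {N : ℕ} {z : Fin N → V} {x : V}

theorem not_strictlySeparated_self (hxz : ∀ i, x ≠ z i) : ¬ StrictlySeparated w z x x := by
  rintro ⟨-, hwalk⟩
  obtain ⟨i, hi⟩ := hwalk .nil
  exact hxz i (List.mem_singleton.1 hi).symm

theorem StrictlySeparated.exists_eq_of_adj {a b : V} (hab : (netGraph w).Adj a b)
    (ha : ¬ StrictlySeparated w z x a) (hb : StrictlySeparated w z x b) : ∃ j, a = z j := by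
  by_contra! hne
  obtain ⟨p, hp⟩ : ∃ p : (netGraph w).Walk x a, ∀ i, z i ∉ p.support := by
    simpa [StrictlySeparated, hne] using ha
  obtain ⟨i, hi⟩ := hb.2 (p.concat hab)
  rw [SimpleGraph.Walk.support_concat, List.mem_append, List.mem_singleton] at hi
  exact hi.elim (hp i) (hb.1 i ∘ Eq.symm)

theorem strictlySeparated_or_exists_eq {y : V}
    (hsep : ∀ p : (netGraph w).Walk x y, ∃ i, z i ∈ p.support) :
    StrictlySeparated w z x y ∨ ∃ j, y = z j :=
  or_iff_not_imp_right.2 fun hy => ⟨fun i h => hy ⟨i, h⟩, hsep⟩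

end Separation

section Energy

variable {V : Type*} [Fintype V] {w : V → V → ℝ}

theorem energy_nonneg (hw : ∀ a b, 0 ≤ w a b) (f : V → ℝ) : 0 ≤ energy w f :=
  mul_nonneg (by norm_num) <|
    sum_nonneg fun a _ => sum_nonneg fun b _ => mul_nonneg (hw a b) (sq_nonneg _)

theorem energy_indicator_le (hw : ∀ a b, 0 ≤ w a b) (U : Set V) [DecidablePred (· ∈ U)]
    (g : V → ℝ) (hg : ∀ a b, (netGraph w).Adj a b → a ∈ U → b ∉ U → g a = 0) :
    energy w (U.indicator g) ≤ energy (fun a b => if a ∈ U ∧ b ∈ U then w a b else 0) g := by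
  unfold energy
  refine mul_le_mul_of_nonneg_left (sum_le_sum fun a _ => sum_le_sum fun b _ => ?_) (by norm_num)
  have hadj : a ≠ b → 0 < w a b → (netGraph w).Adj a b := fun hne hpos =>
    (SimpleGraph.fromRel_adj _ _ _).2 ⟨hne, .inl hpos⟩
  by_cases ha : a ∈ U <;> by_cases hb : b ∈ U <;> rcases (hw a b).eq_or_lt with h | h
  · simp [ha, hb]
  · simp [ha, hb]
  · simp [ha, hb, ← h]
  · simp [ha, hb, hg a b (hadj (ne_of_mem_of_not_mem ha hb) h) ha hb]
  · simp [ha, hb, ← h]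
  · simp [ha, hb, hg b a (hadj (ne_of_mem_of_not_mem hb ha).symm h).symm hb ha]
  · simp [ha, hb]
  · simp [ha, hb]

end Energy

section EffectiveConductance

variable {V : Type*} [Fintype V] {w : V → V → ℝ} {a b : V}

noncomputable def effCond (w : V → V → ℝ) (a b : V) : ℝ :=
  sInf {e : ℝ | ∃ f : V → ℝ, f a = 1 ∧ f b = 0 ∧ energy w f = e}

theorem inv_effResE (hab : a ≠ b) : (effResE w a b)⁻¹ = ENNReal.ofReal (effCond w a b) := by
  rw [effResE, if_neg hab, inv_inv, effCond]

theorem effCond_nonneg (hw : ∀ a b, 0 ≤ w a b) (a b : V) : 0 ≤ effCond w a b :=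
  Real.sInf_nonneg (by rintro _ ⟨f, -, -, rfl⟩; exact energy_nonneg hw f)

theorem effCond_le_energy (hw : ∀ a b, 0 ≤ w a b) {f : V → ℝ} (ha : f a = 1) (hb : f b = 0) :
    effCond w a b ≤ energy w f :=
  csInf_le ⟨0, by rintro _ ⟨g, -, -, rfl⟩; exact energy_nonneg hw g⟩ ⟨f, ha, hb, rfl⟩

theorem exists_energy_lt_effCond_add (hab : a ≠ b) {ε : ℝ} (hε : 0 < ε) :
    ∃ f : V → ℝ, f a = 1 ∧ f b = 0 ∧ energy w f < effCond w a b + ε := by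
  have hne : {e : ℝ | ∃ f : V → ℝ, f a = 1 ∧ f b = 0 ∧ energy w f = e}.Nonempty :=
    ⟨_, fun v => if v = a then 1 else 0, by simp, by simp [hab.symm], rfl⟩
  obtain ⟨_, ⟨f, ha, hb, rfl⟩, hlt⟩ := Real.lt_sInf_add_pos hne hε
  exact ⟨f, ha, hb, hlt⟩

theorem le_sum_effCond_of_forall_le_sum_energy {ι : Type*} [Fintype ι] {x : V} {z : ι → V}
    (hxz : ∀ i, x ≠ z i) {c : ℝ}
    (h : ∀ f : ι → V → ℝ, (∀ i, f i x = 1) → (∀ i, f i (z i) = 0) → c ≤ ∑ i, energy w (f i)) :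
    c ≤ ∑ i, effCond w x (z i) := by
  refine le_of_forall_pos_le_add fun ε hε => ?_
  set n : ℝ := (Fintype.card ι : ℝ)
  have hδ : 0 < ε / (n + 1) := by positivity
  choose f hfx hfz hf using fun i => exists_energy_lt_effCond_add (w := w) (hxz i) hδ
  have hslack : n * (ε / (n + 1)) ≤ ε := by
    rw [mul_div_assoc', div_le_iff₀ (by positivity)]
    linarith
  calc c ≤ ∑ i, energy w (f i) := h f hfx hfz
    _ ≤ ∑ i, (effCond w x (z i) + ε / (n + 1)) := sum_le_sum fun i _ => (hf i).le
    _ = ∑ i, effCond w x (z i) + n * (ε / (n + 1)) := by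
      rw [sum_add_distrib, sum_const, card_univ, nsmul_eq_mul]
    _ ≤ ∑ i, effCond w x (z i) + ε := by linarith

end EffectiveConductance

section TruncatedMinimum

theorem sq_min_sub_min_le (a b c d : ℝ) : (min a b - min c d) ^ 2 ≤ (a - c) ^ 2 + (b - d) ^ 2 := by
  rcases max_choice |a - c| |b - d| with hm | hm <;>
    have h := sq_le_sq.2 ((abs_min_sub_min_le_max a b c d).trans_eq hm)
  · exact h.trans (le_add_of_nonneg_right (sq_nonneg _))
  · exact h.trans (le_add_of_nonneg_left (sq_nonneg _))

theorem sq_fold_min_sub_fold_min_le {ι : Type*} [DecidableEq ι] (s : Finset ι) (c : ℝ)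
    (u v : ι → ℝ) : (s.fold min c u - s.fold min c v) ^ 2 ≤ ∑ i ∈ s, (u i - v i) ^ 2 := by
  induction s using Finset.induction_on with
  | empty => simp
  | insert i s hi ih =>
    rw [fold_insert hi, fold_insert hi, sum_insert hi]
    exact (sq_min_sub_min_le _ _ _ _).trans (by gcongr)

variable {V ι : Type*} [Fintype ι]

noncomputable def truncMin (f : ι → V → ℝ) (v : V) : ℝ :=
  max 0 (univ.fold min 1 fun i => f i v)

variable {f : ι → V → ℝ}

theorem truncMin_eq_one {v : V} (h : ∀ i, f i v = 1) : truncMin f v = 1 := by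
  have hmin : univ.fold min 1 (fun i => f i v) = 1 :=
    le_antisymm ((fold_min_le _).2 (.inl le_rfl)) ((le_fold_min _).2 ⟨le_rfl, fun i _ => (h i).ge⟩)
  rw [truncMin, hmin, max_eq_right zero_le_one]

theorem truncMin_eq_zero {v : V} {j : ι} (h : f j v ≤ 0) : truncMin f v = 0 :=
  max_eq_left ((fold_min_le _).2 (.inr ⟨j, mem_univ j, h⟩))

theorem sq_truncMin_sub_truncMin_le (a b : V) :
    (truncMin f a - truncMin f b) ^ 2 ≤ ∑ i, (f i a - f i b) ^ 2 := by
  have h := abs_max_sub_max_le_abs (univ.fold min 1 fun i => f i a)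
    (univ.fold min 1 fun i => f i b) 0
  rw [max_comm _ (0 : ℝ), max_comm _ (0 : ℝ)] at h
  exact (sq_le_sq.2 h).trans (sq_fold_min_sub_fold_min_le _ _ _ _)

theorem energy_truncMin_le [Fintype V] {w : V → V → ℝ} (hw : ∀ a b, 0 ≤ w a b) :
    energy w (truncMin f) ≤ ∑ i, energy w (f i) := by
  unfold energy
  rw [← mul_sum]
  refine mul_le_mul_of_nonneg_left ?_ (by norm_num)
  calc ∑ a, ∑ b, w a b * (truncMin f a - truncMin f b) ^ 2
      ≤ ∑ a, ∑ b, ∑ i, w a b * (f i a - f i b) ^ 2 := sum_le_sum fun a _ => sum_le_sum fun b _ => by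
        rw [← mul_sum]
        exact mul_le_mul_of_nonneg_left (sq_truncMin_sub_truncMin_le a b) (hw a b)
    _ = ∑ i, ∑ a, ∑ b, w a b * (f i a - f i b) ^ 2 :=
        (sum_congr rfl fun _ _ => sum_comm).trans sum_comm

end TruncatedMinimum

/-- Generalized parallel law: if `{z₁, …, z_N}` separates `x` from `y` in the graph of the
network `(V, w)`, and `K_x` is the network induced on the vertices not strictly separated from
`x` (realized by setting the conductance to zero outside this set), then
`R(x,y)⁻¹ ≤ ∑ i, R_{K_x}(x, z i)⁻¹`. -/
theorem gen_parallel_law {V : Type*} [Fintype V] (w : V → V → ℝ) (hw : IsConductance w)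
    {N : ℕ} (x y : V) (z : Fin N → V)
    (hxy : x ≠ y) (hxz : ∀ i, x ≠ z i)
    (hsep : ∀ p : (netGraph w).Walk x y, ∃ i, z i ∈ p.support)
    (wK : V → V → ℝ)
    (hwK : ∀ a b, wK a b =
      if ¬ StrictlySeparated w z x a ∧ ¬ StrictlySeparated w z x b then w a b else 0) :
    (effResE w x y)⁻¹ ≤ ∑ i : Fin N, (effResE wK x (z i))⁻¹ := by
  have hwK0 : ∀ a b, 0 ≤ wK a b := fun a b => by rw [hwK]; split_ifs <;> simp [hw.1]
  rw [inv_effResE hxy]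
  simp_rw [inv_effResE (hxz _)]
  rw [← ENNReal.ofReal_sum_of_nonneg fun i _ => effCond_nonneg hwK0 _ _]
  gcongr
  refine le_sum_effCond_of_forall_le_sum_energy hxz fun f hfx hfz => ?_
  set U := {v | ¬ StrictlySeparated w z x v}
  have hFx : U.indicator (truncMin f) x = 1 := by
    rw [Set.indicator_of_mem (not_strictlySeparated_self hxz), truncMin_eq_one hfx]
  have hFy : U.indicator (truncMin f) y = 0 := by
    rcases strictlySeparated_or_exists_eq hsep with hy | ⟨j, rfl⟩
    · exact Set.indicator_of_notMem (not_not.2 hy) _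
    · exact Set.indicator_apply_eq_zero.2 fun _ => truncMin_eq_zero (hfz j).le
  have hbdry : ∀ a b, (netGraph w).Adj a b → a ∈ U → b ∉ U → truncMin f a = 0 :=
    fun a b hab ha hb => by
      obtain ⟨j, rfl⟩ := StrictlySeparated.exists_eq_of_adj hab ha (not_not.1 hb)
      exact truncMin_eq_zero (hfz j).le
  calc effCond w x y ≤ energy w (U.indicator (truncMin f)) := effCond_le_energy hw.1 hFx hFy
    _ ≤ energy wK (truncMin f) := by
      convert energy_indicator_le hw.1 U _ hbdry using 2
      exact funext₂ hwK
    _ ≤ ∑ i, energy wK (f i) := energy_truncMin_le hwK0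
end

section
/- Let F₁, F₂ be two nonempty sets such that F₁ ∩ F₂ is a nonempty finite set. For i = 1, 2, let (E_i, 𝓕_i) be a resistance form on F_i. Define 𝓕 = {f : F₁ ∪ F₂ → ℝ : f|_{F₁} ∈ 𝓕₁ and f|_{F₂} ∈ 𝓕₂} and E(f,f) = E₁(f|_{F₁}, f|_{F₁}) + E₂(f|_{F₂}, f|_{F₂}). Then (E, 𝓕) is a resistance form on F₁ ∪ F₂. -/
/-!
The axioms pass to the glued form piece by piece, a point `x₀ ∈ S₁ ∩ S₂` tying the pieces
together: a function of zero energy is constant on each piece with the same value at `x₀`, and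
resistance bounds between points of different pieces go through `x₀`. For completeness, the limits
on the two pieces, normalised to vanish at `x₀`, are by RF4 the pointwise limits of
`u n x - u n x₀`, so they agree on the overlap and glue. For separation, functions with prescribed
values on the finite set `S₁ ∩ S₂ ∪ {x, y}` exist on each piece (bump functions come from the
truncation property RF5), and they glue.
-/

open scoped Classical

/-- A resistance form `(En, Dom)` on a nonempty set `F` (Kigami).  `Dom` is a linear subspace
of the real-valued functions on `F` containing the constants; `En` is a nonnegative symmetric
bilinear form on `Dom` vanishing exactly on constants (RF1); the quotient of `Dom` by constants
is complete for the energy (pseudo-)norm (RF2, stated sequentially); `Dom` separates points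
(RF3); the resistance suprema are finite (RF4); and the Markov/truncation property holds
(RF5). -/
structure IsResistanceForm (F : Type*) (En : (F → ℝ) → (F → ℝ) → ℝ)
    (Dom : Set (F → ℝ)) : Prop where
  nonempty : Nonempty F
  const_mem : ∀ c : ℝ, (fun _ => c) ∈ Dom
  add_mem : ∀ ⦃f g : F → ℝ⦄, f ∈ Dom → g ∈ Dom → f + g ∈ Dom
  smul_mem : ∀ (c : ℝ) ⦃f : F → ℝ⦄, f ∈ Dom → c • f ∈ Dom
  symm : ∀ ⦃f g : F → ℝ⦄, f ∈ Dom → g ∈ Dom → En f g = En g f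
  add_left : ∀ ⦃f g h : F → ℝ⦄, f ∈ Dom → g ∈ Dom → h ∈ Dom →
    En (f + g) h = En f h + En g h
  smul_left : ∀ (c : ℝ) ⦃f g : F → ℝ⦄, f ∈ Dom → g ∈ Dom → En (c • f) g = c * En f g
  nonneg : ∀ ⦃f : F → ℝ⦄, f ∈ Dom → 0 ≤ En f f
  eq_zero_iff : ∀ ⦃f : F → ℝ⦄, f ∈ Dom → (En f f = 0 ↔ ∃ c : ℝ, f = fun _ => c)
  complete : ∀ u : ℕ → F → ℝ, (∀ n, u n ∈ Dom) →
    (∀ ε : ℝ, 0 < ε → ∃ N, ∀ m ≥ N, ∀ n ≥ N, En (u m - u n) (u m - u n) < ε) →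
    ∃ g ∈ Dom, ∀ ε : ℝ, 0 < ε → ∃ N, ∀ n ≥ N, En (u n - g) (u n - g) < ε
  separates : ∀ ⦃x y : F⦄, x ≠ y → ∃ f ∈ Dom, f x ≠ f y
  bddAbove : ∀ x y : F,
    BddAbove {r : ℝ | ∃ f ∈ Dom, 0 < En f f ∧ r = (f x - f y) ^ 2 / En f f}
  markov : ∀ ⦃f : F → ℝ⦄, f ∈ Dom →
    (fun t => min (max (f t) 0) 1) ∈ Dom ∧
    En (fun t => min (max (f t) 0) 1) (fun t => min (max (f t) 0) 1) ≤ En f f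

/-- The resistance metric associated with a resistance form:
`R(x,y) = sup {(f x - f y)² / En f f}` for `x ≠ y`, and `R(x,x) = 0`. -/
noncomputable def resMetric {F : Type*} (En : (F → ℝ) → (F → ℝ) → ℝ)
    (Dom : Set (F → ℝ)) (x y : F) : ℝ :=
  if x = y then 0
  else sSup {r : ℝ | ∃ f ∈ Dom, 0 < En f f ∧ r = (f x - f y) ^ 2 / En f f}

open Filter Topology Set

namespace IsResistanceForm

variable {G : Type*} {En : (G → ℝ) → (G → ℝ) → ℝ} {Dom : Set (G → ℝ)}

theorem sub_mem (h : IsResistanceForm G En Dom) {f g : G → ℝ} (hf : f ∈ Dom) (hg : g ∈ Dom) :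
    f - g ∈ Dom := by
  simpa [sub_eq_add_neg] using h.add_mem hf (h.smul_mem (-1) hg)

theorem energy_add_smul (h : IsResistanceForm G En Dom) {f g : G → ℝ} (hf : f ∈ Dom)
    (hg : g ∈ Dom) (c : ℝ) :
    En (f + c • g) (f + c • g) = En f f + 2 * c * En f g + c ^ 2 * En g g := by
  have hcg := h.smul_mem c hg
  have hsum := h.add_mem hf hcg
  rw [h.add_left hf hcg hsum, h.symm hf hsum, h.symm hcg hsum,
    h.add_left hf hcg hf, h.add_left hf hcg hcg,
    h.smul_left c hg hf, h.symm hf hcg, h.smul_left c hg hf,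
    h.smul_left c hg hcg, h.symm hg hcg, h.smul_left c hg hg, h.symm hg hf]
  ring

/-- `t ↦ En (f + t • g) (f + t • g) = En f f + 2 t En f g` is a nonnegative affine function. -/
theorem energy_eq_zero_of_energy_self_eq_zero (h : IsResistanceForm G En Dom) {f g : G → ℝ}
    (hf : f ∈ Dom) (hg : g ∈ Dom) (hg0 : En g g = 0) : En f g = 0 := by
  by_contra hne
  have key := h.nonneg (h.add_mem hf (h.smul_mem (-(En f f + 1) / (2 * En f g)) hg))
  rw [h.energy_add_smul hf hg, hg0,
    show 2 * (-(En f f + 1) / (2 * En f g)) * En f g = -(En f f + 1) by field_simp] at key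
  linarith

theorem energy_const (h : IsResistanceForm G En Dom) (c : ℝ) :
    En (fun _ => c) (fun _ => c) = 0 :=
  (h.eq_zero_iff (h.const_mem c)).mpr ⟨c, rfl⟩

theorem energy_add_const (h : IsResistanceForm G En Dom) {f : G → ℝ} (hf : f ∈ Dom) (c : ℝ) :
    En (f + fun _ => c) (f + fun _ => c) = En f f := by
  have hone := h.const_mem 1
  rw [show (f + fun _ => c) = f + c • (fun _ => (1 : ℝ)) by funext; simp,
    h.energy_add_smul hf hone c,
    h.energy_eq_zero_of_energy_self_eq_zero hf hone (h.energy_const 1), h.energy_const 1]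
  ring

theorem exists_sq_sub_le_mul_energy (h : IsResistanceForm G En Dom) (x y : G) :
    ∃ M : ℝ, 0 ≤ M ∧ ∀ f ∈ Dom, (f x - f y) ^ 2 ≤ M * En f f := by
  obtain ⟨M, hM⟩ := h.bddAbove x y
  refine ⟨max M 0, le_max_right _ _, fun f hf => ?_⟩
  rcases (h.nonneg hf).eq_or_lt with h0 | h0
  · obtain ⟨c, rfl⟩ := (h.eq_zero_iff hf).mp h0.symm
    simp [← h0]
  · have := (div_le_iff₀ h0).mp (hM ⟨f, hf, h0, rfl⟩)
    nlinarith [le_max_left M 0]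

theorem tendsto_sub_apply (h : IsResistanceForm G En Dom) {u : ℕ → G → ℝ} {g : G → ℝ}
    (hu : ∀ n, u n ∈ Dom) (hg : g ∈ Dom)
    (hconv : ∀ ε : ℝ, 0 < ε → ∃ N, ∀ n ≥ N, En (u n - g) (u n - g) < ε) (x y : G) :
    Tendsto (fun n => u n x - u n y) atTop (𝓝 (g x - g y)) := by
  obtain ⟨M, -, hM⟩ := h.exists_sq_sub_le_mul_energy x y
  have henergy : Tendsto (fun n => En (u n - g) (u n - g)) atTop (𝓝 0) := by
    refine Metric.tendsto_atTop.mpr fun ε hε => ?_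
    obtain ⟨N, hN⟩ := hconv ε hε
    refine ⟨N, fun n hn => ?_⟩
    rw [Real.dist_eq, sub_zero, abs_of_nonneg (h.nonneg (h.sub_mem (hu n) hg))]
    exact hN n hn
  have hbound : Tendsto (fun n => Real.sqrt (M * En (u n - g) (u n - g))) atTop (𝓝 0) := by
    simpa using ((henergy.const_mul M).sqrt)
  refine tendsto_iff_norm_sub_tendsto_zero.mpr (squeeze_zero (fun _ => norm_nonneg _)
    (fun n => ?_) hbound)
  rw [Real.norm_eq_abs]
  apply Real.abs_le_sqrt
  convert hM _ (h.sub_mem (hu n) hg) using 2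
  simp only [Pi.sub_apply]
  ring

theorem exists_limit_apply_eq_zero (h : IsResistanceForm G En Dom) (x₀ : G)
    {u : ℕ → G → ℝ} (hu : ∀ n, u n ∈ Dom)
    (hcau : ∀ ε : ℝ, 0 < ε → ∃ N, ∀ m ≥ N, ∀ n ≥ N, En (u m - u n) (u m - u n) < ε) :
    ∃ g ∈ Dom, g x₀ = 0 ∧ ∀ ε : ℝ, 0 < ε → ∃ N, ∀ n ≥ N, En (u n - g) (u n - g) < ε := by
  obtain ⟨g, hg, hconv⟩ := h.complete u hu hcau
  refine ⟨g + fun _ => -g x₀, h.add_mem hg (h.const_mem _), by simp, fun ε hε => ?_⟩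
  obtain ⟨N, hN⟩ := hconv ε hε
  refine ⟨N, fun n hn => ?_⟩
  rw [show u n - (g + fun _ => -g x₀) = (u n - g) + fun _ => g x₀ by funext; simp; ring,
    h.energy_add_const (h.sub_mem (hu n) hg)]
  exact hN n hn

theorem exists_apply_eq_one_apply_eq_zero (h : IsResistanceForm G En Dom) {x y : G}
    (hxy : x ≠ y) : ∃ g ∈ Dom, g x = 1 ∧ g y = 0 := by
  obtain ⟨g, hg, hne⟩ := h.separates hxy
  refine ⟨(g x - g y)⁻¹ • (g - fun _ => g y), h.smul_mem _ (h.sub_mem hg (h.const_mem _)),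
    ?_, by simp⟩
  simp [inv_mul_cancel₀ (sub_ne_zero.mpr hne)]

/-- Induction on `V`: with `f = 1` at `x` vanishing on `V` and `g = 1` at `x` vanishing at `a`,
the truncation of `f̄ + ḡ - 1` (bars denoting truncations to `[0, 1]`) vanishes on `insert a V`. -/
theorem exists_apply_eq_one_eqOn_zero (h : IsResistanceForm G En Dom) {V : Set G}
    (hV : V.Finite) {x : G} (hx : x ∉ V) : ∃ f ∈ Dom, f x = 1 ∧ EqOn f 0 V := by
  induction V, hV using Set.Finite.induction_on with
  | empty => exact ⟨fun _ => 1, h.const_mem 1, rfl, eqOn_empty _ _⟩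
  | @insert a V _ _ ih =>
    obtain ⟨hxa, hxV⟩ : x ≠ a ∧ x ∉ V := by simpa using hx
    obtain ⟨f, hf, hfx, hfV⟩ := ih hxV
    obtain ⟨g, hg, hgx, hga⟩ := h.exists_apply_eq_one_apply_eq_zero hxa
    set k : G → ℝ := (fun t => min (max (f t) 0) 1) + (fun t => min (max (g t) 0) 1) - 1
    have hk : k ∈ Dom := h.sub_mem (h.add_mem (h.markov hf).1 (h.markov hg).1) (h.const_mem 1)
    refine ⟨fun t => min (max (k t) 0) 1, (h.markov hk).1, by simp [k, hfx, hgx], ?_⟩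
    rintro z (rfl | hz)
    · have : k z ≤ 0 := by simp [k, hga]
      simp [max_eq_right this]
    · have : k z ≤ 0 := by simp [k, show f z = 0 from hfV hz]
      simp [max_eq_right this]

theorem exists_eqOn (h : IsResistanceForm G En Dom) {V : Set G} (hV : V.Finite) (v : G → ℝ) :
    ∃ f ∈ Dom, EqOn f v V := by
  induction V, hV using Set.Finite.induction_on with
  | empty => exact ⟨0, h.const_mem 0, eqOn_empty _ _⟩
  | @insert a V haV hV ih =>
    obtain ⟨f, hf, hfV⟩ := ih
    obtain ⟨χ, hχ, hχa, hχV⟩ := h.exists_apply_eq_one_eqOn_zero hV haV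
    refine ⟨f + (v a - f a) • χ, h.add_mem hf (h.smul_mem _ hχ), ?_⟩
    rintro z (rfl | hz)
    · simp [hχa]
    · simp [hfV hz, show χ z = 0 from hχV hz]

end IsResistanceForm

theorem exists_domRestrict_eq_of_agree {F β : Type*} [Inhabited β] {S₁ S₂ : Set F}
    (f₁ : S₁ → β) (f₂ : S₂ → β)
    (hagree : ∀ x (hx₁ : x ∈ S₁) (hx₂ : x ∈ S₂), f₁ ⟨x, hx₁⟩ = f₂ ⟨x, hx₂⟩) :
    ∃ f : F → β, S₁.domRestrict f = f₁ ∧ S₂.domRestrict f = f₂ := by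
  refine ⟨fun x => if hx₁ : x ∈ S₁ then f₁ ⟨x, hx₁⟩ else if hx₂ : x ∈ S₂ then f₂ ⟨x, hx₂⟩
    else default, funext fun ⟨x, hx⟩ => by simp [domRestrict_apply, hx],
    funext fun ⟨x, hx₂⟩ => ?_⟩
  by_cases hx₁ : x ∈ S₁ <;> simp [domRestrict_apply, hx₁, hx₂, hagree]

section Glue

variable {F : Type*} {S₁ S₂ : Set F}

def glueDomain (Dom₁ : Set (S₁ → ℝ)) (Dom₂ : Set (S₂ → ℝ)) : Set (F → ℝ) :=
  {f | S₁.domRestrict f ∈ Dom₁ ∧ S₂.domRestrict f ∈ Dom₂}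

def glueEnergy (En₁ : (S₁ → ℝ) → (S₁ → ℝ) → ℝ) (En₂ : (S₂ → ℝ) → (S₂ → ℝ) → ℝ)
    (f g : F → ℝ) : ℝ :=
  En₁ (S₁.domRestrict f) (S₁.domRestrict g) + En₂ (S₂.domRestrict f) (S₂.domRestrict g)

variable {En₁ : (S₁ → ℝ) → (S₁ → ℝ) → ℝ} {Dom₁ : Set (S₁ → ℝ)}
  {En₂ : (S₂ → ℝ) → (S₂ → ℝ) → ℝ} {Dom₂ : Set (S₂ → ℝ)}

theorem energy_domRestrict_left_le_glueEnergy (h₂ : IsResistanceForm S₂ En₂ Dom₂) {f : F → ℝ}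
    (hf : S₂.domRestrict f ∈ Dom₂) :
    En₁ (S₁.domRestrict f) (S₁.domRestrict f) ≤ glueEnergy En₁ En₂ f f :=
  le_add_of_nonneg_right (h₂.nonneg hf)

theorem energy_domRestrict_right_le_glueEnergy (h₁ : IsResistanceForm S₁ En₁ Dom₁) {f : F → ℝ}
    (hf : S₁.domRestrict f ∈ Dom₁) :
    En₂ (S₂.domRestrict f) (S₂.domRestrict f) ≤ glueEnergy En₁ En₂ f f :=
  le_add_of_nonneg_left (h₁.nonneg hf)

theorem glueEnergy_self_eq_zero_iff (h₁ : IsResistanceForm S₁ En₁ Dom₁)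
    (h₂ : IsResistanceForm S₂ En₂ Dom₂) (hUnion : S₁ ∪ S₂ = univ) {x₀ : F}
    (hx₀ : x₀ ∈ S₁ ∩ S₂) {f : F → ℝ} (hf : f ∈ glueDomain Dom₁ Dom₂) :
    glueEnergy En₁ En₂ f f = 0 ↔ ∃ c : ℝ, f = fun _ => c := by
  constructor
  · intro h0
    obtain ⟨e₁, e₂⟩ := (add_eq_zero_iff_of_nonneg (h₁.nonneg hf.1) (h₂.nonneg hf.2)).mp h0
    obtain ⟨c₁, hc₁⟩ := (h₁.eq_zero_iff hf.1).mp e₁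
    obtain ⟨c₂, hc₂⟩ := (h₂.eq_zero_iff hf.2).mp e₂
    have hc : c₁ = c₂ := (congrFun hc₁ ⟨x₀, hx₀.1⟩).symm.trans (congrFun hc₂ ⟨x₀, hx₀.2⟩)
    refine ⟨c₁, funext fun x => ?_⟩
    rcases eq_univ_iff_forall.mp hUnion x with hx | hx
    · exact congrFun hc₁ ⟨x, hx⟩
    · exact (congrFun hc₂ ⟨x, hx⟩).trans hc.symm
  · rintro ⟨c, rfl⟩
    exact (congrArg₂ (· + ·) (h₁.energy_const c) (h₂.energy_const c)).trans (add_zero 0)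

theorem glue_complete (h₁ : IsResistanceForm S₁ En₁ Dom₁) (h₂ : IsResistanceForm S₂ En₂ Dom₂)
    {x₀ : F} (hx₀ : x₀ ∈ S₁ ∩ S₂) (u : ℕ → F → ℝ) (hu : ∀ n, u n ∈ glueDomain Dom₁ Dom₂)
    (hcau : ∀ ε : ℝ, 0 < ε → ∃ N, ∀ m ≥ N, ∀ n ≥ N,
      glueEnergy En₁ En₂ (u m - u n) (u m - u n) < ε) :
    ∃ g ∈ glueDomain Dom₁ Dom₂, ∀ ε : ℝ, 0 < ε → ∃ N, ∀ n ≥ N,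
      glueEnergy En₁ En₂ (u n - g) (u n - g) < ε := by
  have hdiff (m n : ℕ) : u m - u n ∈ glueDomain Dom₁ Dom₂ :=
    ⟨h₁.sub_mem (hu m).1 (hu n).1, h₂.sub_mem (hu m).2 (hu n).2⟩
  obtain ⟨g₁, hg₁, hg₁x₀, hconv₁⟩ := h₁.exists_limit_apply_eq_zero ⟨x₀, hx₀.1⟩
    (u := fun n => S₁.domRestrict (u n)) (fun n => (hu n).1) fun ε hε => (hcau ε hε).imp
      fun _ hN m hm n hn => (energy_domRestrict_left_le_glueEnergy h₂ (hdiff m n).2).trans_lt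
        (hN m hm n hn)
  obtain ⟨g₂, hg₂, hg₂x₀, hconv₂⟩ := h₂.exists_limit_apply_eq_zero ⟨x₀, hx₀.2⟩
    (u := fun n => S₂.domRestrict (u n)) (fun n => (hu n).2) fun ε hε => (hcau ε hε).imp
      fun _ hN m hm n hn => (energy_domRestrict_right_le_glueEnergy h₁ (hdiff m n).1).trans_lt
        (hN m hm n hn)
  have hagree (x : F) (hx₁ : x ∈ S₁) (hx₂ : x ∈ S₂) : g₁ ⟨x, hx₁⟩ = g₂ ⟨x, hx₂⟩ := by
    have := tendsto_nhds_unique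
      (h₁.tendsto_sub_apply (fun n => (hu n).1) hg₁ hconv₁ ⟨x, hx₁⟩ ⟨x₀, hx₀.1⟩)
      (h₂.tendsto_sub_apply (fun n => (hu n).2) hg₂ hconv₂ ⟨x, hx₂⟩ ⟨x₀, hx₀.2⟩)
    simpa [hg₁x₀, hg₂x₀] using this
  obtain ⟨g, rfl, rfl⟩ := exists_domRestrict_eq_of_agree g₁ g₂ hagree
  refine ⟨g, ⟨hg₁, hg₂⟩, fun ε hε => ?_⟩
  obtain ⟨N₁, hN₁⟩ := hconv₁ (ε / 2) (half_pos hε)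
  obtain ⟨N₂, hN₂⟩ := hconv₂ (ε / 2) (half_pos hε)
  exact ⟨max N₁ N₂, fun n hn => (add_lt_add (hN₁ n (le_of_max_le_left hn))
    (hN₂ n (le_of_max_le_right hn))).trans_eq (add_halves ε)⟩

theorem glue_separates (h₁ : IsResistanceForm S₁ En₁ Dom₁) (h₂ : IsResistanceForm S₂ En₂ Dom₂)
    (hUnion : S₁ ∪ S₂ = univ) (hFin : (S₁ ∩ S₂).Finite) {x y : F} (hxy : x ≠ y) :
    ∃ f ∈ glueDomain Dom₁ Dom₂, f x ≠ f y := by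
  set V : Set F := S₁ ∩ S₂ ∪ {x, y}
  have hV : V.Finite := hFin.union (toFinite _)
  set v : F → ℝ := fun z => if z = x then 1 else 0
  obtain ⟨f₁, hf₁, hf₁V⟩ :=
    h₁.exists_eqOn (hV.preimage Subtype.val_injective.injOn) (v ∘ Subtype.val)
  obtain ⟨f₂, hf₂, hf₂V⟩ :=
    h₂.exists_eqOn (hV.preimage Subtype.val_injective.injOn) (v ∘ Subtype.val)
  obtain ⟨f, hfr₁, hfr₂⟩ := exists_domRestrict_eq_of_agree f₁ f₂ fun z hz₁ hz₂ =>
    (@hf₁V ⟨z, hz₁⟩ (Or.inl ⟨hz₁, hz₂⟩)).trans (@hf₂V ⟨z, hz₂⟩ (Or.inl ⟨hz₁, hz₂⟩)).symm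
  have hfv : EqOn f v {x, y} := by
    intro z hz
    rcases eq_univ_iff_forall.mp hUnion z with hz₁ | hz₂
    · exact (congrFun hfr₁ ⟨z, hz₁⟩).trans (hf₁V (Or.inr hz))
    · exact (congrFun hfr₂ ⟨z, hz₂⟩).trans (hf₂V (Or.inr hz))
  refine ⟨f, ⟨hfr₁ ▸ hf₁, hfr₂ ▸ hf₂⟩, ?_⟩
  rw [hfv (mem_insert x _), hfv (mem_insert_of_mem x rfl)]
  simp [v, hxy.symm]

theorem exists_sq_sub_le_mul_glueEnergy_of_mem_left (h₁ : IsResistanceForm S₁ En₁ Dom₁)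
    (h₂ : IsResistanceForm S₂ En₂ Dom₂) {z w : F} (hz : z ∈ S₁) (hw : w ∈ S₁) :
    ∃ M : ℝ, ∀ f ∈ glueDomain Dom₁ Dom₂, (f z - f w) ^ 2 ≤ M * glueEnergy En₁ En₂ f f := by
  obtain ⟨M, hM0, hM⟩ := h₁.exists_sq_sub_le_mul_energy ⟨z, hz⟩ ⟨w, hw⟩
  exact ⟨M, fun f hf => (hM _ hf.1).trans
    (mul_le_mul_of_nonneg_left (energy_domRestrict_left_le_glueEnergy h₂ hf.2) hM0)⟩

theorem exists_sq_sub_le_mul_glueEnergy_of_mem_right (h₁ : IsResistanceForm S₁ En₁ Dom₁)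
    (h₂ : IsResistanceForm S₂ En₂ Dom₂) {z w : F} (hz : z ∈ S₂) (hw : w ∈ S₂) :
    ∃ M : ℝ, ∀ f ∈ glueDomain Dom₁ Dom₂, (f z - f w) ^ 2 ≤ M * glueEnergy En₁ En₂ f f := by
  obtain ⟨M, hM0, hM⟩ := h₂.exists_sq_sub_le_mul_energy ⟨z, hz⟩ ⟨w, hw⟩
  exact ⟨M, fun f hf => (hM _ hf.2).trans
    (mul_le_mul_of_nonneg_left (energy_domRestrict_right_le_glueEnergy h₁ hf.1) hM0)⟩

theorem glue_bddAbove (h₁ : IsResistanceForm S₁ En₁ Dom₁) (h₂ : IsResistanceForm S₂ En₂ Dom₂)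
    (hUnion : S₁ ∪ S₂ = univ) {x₀ : F} (hx₀ : x₀ ∈ S₁ ∩ S₂) (x y : F) :
    BddAbove {r : ℝ | ∃ f ∈ glueDomain Dom₁ Dom₂, 0 < glueEnergy En₁ En₂ f f ∧
      r = (f x - f y) ^ 2 / glueEnergy En₁ En₂ f f} := by
  have hbase (z : F) : ∃ M : ℝ, ∀ f ∈ glueDomain Dom₁ Dom₂,
      (f z - f x₀) ^ 2 ≤ M * glueEnergy En₁ En₂ f f := by
    rcases eq_univ_iff_forall.mp hUnion z with hz | hz
    · exact exists_sq_sub_le_mul_glueEnergy_of_mem_left h₁ h₂ hz hx₀.1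
    · exact exists_sq_sub_le_mul_glueEnergy_of_mem_right h₁ h₂ hz hx₀.2
  obtain ⟨Mx, hMx⟩ := hbase x
  obtain ⟨My, hMy⟩ := hbase y
  refine ⟨2 * Mx + 2 * My, ?_⟩
  rintro _ ⟨f, hf, hpos, rfl⟩
  rw [div_le_iff₀ hpos]
  nlinarith [hMx f hf, hMy f hf, sq_nonneg (f x - f x₀ + (f y - f x₀))]

end Glue

/-- If `F₁, F₂` are nonempty sets whose intersection is a nonempty finite set and
`(En_i, Dom_i)` are resistance forms on `F_i`, then the sum form with domain
`{f : f|_{F₁} ∈ Dom₁, f|_{F₂} ∈ Dom₂}` is a resistance form on `F₁ ∪ F₂`. -/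
theorem resistance_form_glue_finite_intersection {F : Type*} (S₁ S₂ : Set F)
    (hUnion : S₁ ∪ S₂ = Set.univ)
    (hFin : (S₁ ∩ S₂).Finite) (hNe : (S₁ ∩ S₂).Nonempty)
    (En₁ : (↥S₁ → ℝ) → (↥S₁ → ℝ) → ℝ) (Dom₁ : Set (↥S₁ → ℝ))
    (En₂ : (↥S₂ → ℝ) → (↥S₂ → ℝ) → ℝ) (Dom₂ : Set (↥S₂ → ℝ))
    (h₁ : IsResistanceForm ↥S₁ En₁ Dom₁)
    (h₂ : IsResistanceForm ↥S₂ En₂ Dom₂)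
    (En : (F → ℝ) → (F → ℝ) → ℝ) (Dom : Set (F → ℝ))
    (hDom : Dom = {f : F → ℝ | S₁.restrict f ∈ Dom₁ ∧ S₂.restrict f ∈ Dom₂})
    (hEn : ∀ f g : F → ℝ,
      En f g = En₁ (S₁.restrict f) (S₁.restrict g) + En₂ (S₂.restrict f) (S₂.restrict g)) :
    IsResistanceForm F En Dom := by
  obtain ⟨x₀, hx₀⟩ := hNe
  obtain rfl : Dom = glueDomain Dom₁ Dom₂ := hDom
  obtain rfl : En = glueEnergy En₁ En₂ := funext₂ hEn
  exact
  { nonempty := ⟨x₀⟩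
    const_mem := fun c => ⟨h₁.const_mem c, h₂.const_mem c⟩
    add_mem := fun _ _ hf hg => ⟨h₁.add_mem hf.1 hg.1, h₂.add_mem hf.2 hg.2⟩
    smul_mem := fun c _ hf => ⟨h₁.smul_mem c hf.1, h₂.smul_mem c hf.2⟩
    symm := fun _ _ hf hg => congrArg₂ (· + ·) (h₁.symm hf.1 hg.1) (h₂.symm hf.2 hg.2)
    add_left := fun _ _ _ hf hg hk =>
      (congrArg₂ (· + ·) (h₁.add_left hf.1 hg.1 hk.1) (h₂.add_left hf.2 hg.2 hk.2)).trans
        (add_add_add_comm _ _ _ _)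
    smul_left := fun c _ _ hf hg =>
      (congrArg₂ (· + ·) (h₁.smul_left c hf.1 hg.1) (h₂.smul_left c hf.2 hg.2)).trans
        (mul_add c _ _).symm
    nonneg := fun _ hf => add_nonneg (h₁.nonneg hf.1) (h₂.nonneg hf.2)
    eq_zero_iff := fun _ hf => glueEnergy_self_eq_zero_iff h₁ h₂ hUnion hx₀ hf
    complete := glue_complete h₁ h₂ hx₀
    separates := fun _ _ hxy => glue_separates h₁ h₂ hUnion hFin hxy
    bddAbove := glue_bddAbove h₁ h₂ hUnion hx₀
    markov := fun _ hf => ⟨⟨(h₁.markov hf.1).1, (h₂.markov hf.2).1⟩,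
      add_le_add (h₁.markov hf.1).2 (h₂.markov hf.2).2⟩ }
end

section
/- Let F₁, F₂ be two nonempty sets such that F₁ ∩ F₂ is a nonempty finite set. For i = 1, 2, let (E_i, 𝓕_i) be a resistance form on F_i, and let (E, 𝓕) be the resistance form on F₁ ∪ F₂ given by 𝓕 = {f : f|_{F₁} ∈ 𝓕₁, f|_{F₂} ∈ 𝓕₂} and E(f,f) = E₁(f|_{F₁}, f|_{F₁}) + E₂(f|_{F₂}, f|_{F₂}). Let A ⊆ F₁ ∪ F₂ be a finite set containing F₁ ∩ F₂ and set A_i = A ∩ F_i for i = 1, 2. Let w_A : A × A → [0,∞) (respectively w_{A,i} : A_i × A_i → [0,∞)) be edge conductance functions whose associated graph energies equal the trace forms E|_A (respectively E_i|_{A_i}), i.e., (1/2) Σ_{x,y ∈ A} w_A(x,y)(g(x)−g(y))² = E|_A(g,g) for every g : A → ℝ, and similarly for w_{A,i}. Then w_A(x,y) = w_{A,1}(x,y) + w_{A,2}(x,y) if x, y ∈ F₁ ∩ F₂; w_A(x,y) = w_{A,1}(x,y) if x, y ∈ F₁ and {x,y} ⊄ F₁ ∩ F₂; w_A(x,y)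 = w_{A,2}(x,y) if x, y ∈ F₂ and {x,y} ⊄ F₁ ∩ F₂; and w_A(x,y) = 0 otherwise. -/
/-! Gluing makes the traces additive: an extension of `g : A → ℝ` in the glued domain is exactly
a pair of extensions of `g|_{A₁}` and `g|_{A₂}`, which automatically agree on `F₁ ∩ F₂ ⊆ A`, and
the energies add. Such pairs always exist, since a resistance form extends every function on a
finite set (minima of Markov truncations give bumps at single points). Hence
`Q_{w_A}(g) = Q_{w_{A,1}}(g|_{A₁}) + Q_{w_{A,2}}(g|_{A₂})` for the graph energies `Q`; polarizing
and evaluating at the indicators of `x ≠ y` returns `-w(x, y)` on each side, while the indicator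
of a point outside `F_i` restricts to zero on `A_i`. -/

open scoped Classical

/-- The trace of a form `(En, Dom)` on a subset `A`: for `g : A → ℝ`,
`En|_A(g,g) = inf {En f f : f ∈ Dom, f|_A = g}`. -/
noncomputable def traceEnergy {F : Type*} (En : (F → ℝ) → (F → ℝ) → ℝ)
    (Dom : Set (F → ℝ)) (A : Set F) (g : ↥A → ℝ) : ℝ :=
  sInf {e : ℝ | ∃ f ∈ Dom, A.restrict f = g ∧ En f f = e}

namespace IsResistanceForm

variable {X : Type*} {En : (X → ℝ) → (X → ℝ) → ℝ} {Dom : Set (X → ℝ)}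

def domain (h : IsResistanceForm X En Dom) : Submodule ℝ (X → ℝ) where
  carrier := Dom
  add_mem' hf hg := h.add_mem hf hg
  zero_mem' := h.const_mem 0
  smul_mem' c _ hf := h.smul_mem c hf

lemma exists_mem_eq_one_eq_zero (h : IsResistanceForm X En Dom) {x y : X} (hxy : x ≠ y) :
    ∃ f ∈ Dom, f x = 1 ∧ f y = 0 ∧ ∀ t, f t ∈ Set.Icc (0 : ℝ) 1 := by
  obtain ⟨f, hf, hfxy⟩ := h.separates hxy
  have hc : f x - f y ≠ 0 := sub_ne_zero.mpr hfxy
  have hu : (f x - f y)⁻¹ • (f - fun _ => f y) ∈ Dom :=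
    h.domain.smul_mem _ (h.domain.sub_mem hf (h.const_mem _))
  refine ⟨_, (h.markov hu).1, ?_, ?_, fun t => ⟨le_min (le_max_right _ _) zero_le_one,
    min_le_right _ _⟩⟩ <;> simp [hc]

lemma min_mem (h : IsResistanceForm X En Dom) {f g : X → ℝ} (hf : f ∈ Dom) (hg : g ∈ Dom)
    (hf01 : ∀ t, f t ∈ Set.Icc (0 : ℝ) 1) (hg01 : ∀ t, g t ∈ Set.Icc (0 : ℝ) 1) :
    (fun t => min (f t) (g t)) ∈ Dom := by
  -- for values in `[0, 1]`, `min a b = a - min (max (a - b) 0) 1`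
  have key : (fun t => min (f t) (g t)) = f - fun t => min (max ((f - g) t) 0) 1 := by
    funext t
    obtain ⟨⟨hf0, hf1⟩, hg0, hg1⟩ := And.intro (hf01 t) (hg01 t)
    simp only [Pi.sub_apply]
    rcases le_total (f t) (g t) with hfg | hfg
    · rw [min_eq_left hfg, max_eq_right (by linarith), min_eq_left zero_le_one, sub_zero]
    · rw [min_eq_right hfg, max_eq_left (by linarith), min_eq_left (by linarith)]
      ring
  rw [key]
  exact h.domain.sub_mem hf (h.markov (h.domain.sub_mem hf hg)).1

lemma exists_bump (h : IsResistanceForm X En Dom) {a : X} (s : Finset X) (ha : a ∉ s) :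
    ∃ f ∈ Dom, f a = 1 ∧ (∀ t, f t ∈ Set.Icc (0 : ℝ) 1) ∧ ∀ b ∈ s, f b = 0 := by
  induction s using Finset.induction_on with
  | empty => exact ⟨fun _ => 1, h.const_mem 1, rfl, fun _ => ⟨zero_le_one, le_rfl⟩, by simp⟩
  | insert b s _ ih =>
    obtain ⟨f, hf, hfa, hf01, hfs⟩ := ih fun has => ha (Finset.mem_insert_of_mem has)
    obtain ⟨g, hg, hga, hgb, hg01⟩ :=
      h.exists_mem_eq_one_eq_zero (x := a) (y := b) fun hab => ha (by simp [hab])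
    refine ⟨_, h.min_mem hf hg hf01 hg01, by simp [hfa, hga],
      fun t => ⟨le_min (hf01 t).1 (hg01 t).1, (min_le_left _ _).trans (hf01 t).2⟩, ?_⟩
    simp only [Finset.mem_insert, forall_eq_or_imp]
    exact ⟨by simp [hgb, (hf01 b).1], fun c hc => by simp [hfs c hc, (hg01 c).1]⟩

lemma exists_restrict_eq (h : IsResistanceForm X En Dom) (A : Set X) [Finite A] (g : A → ℝ) :
    ∃ f ∈ Dom, A.restrict f = g := by
  have := Fintype.ofFinite A
  have hbump : ∀ a : A, ∃ f ∈ Dom, f a = 1 ∧ ∀ b : A, b ≠ a → f b = 0 := by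
    intro a
    obtain ⟨f, hf, hfa, -, hfs⟩ :=
      h.exists_bump (a := a) ((Finset.univ.erase a).image Subtype.val) (by simp)
    exact ⟨f, hf, hfa, fun b hb => hfs b (by simp [Subtype.val_inj, hb])⟩
  choose φ hφ hφa hφb using hbump
  refine ⟨∑ a, g a • φ a, h.domain.sum_mem fun a _ => h.domain.smul_mem _ (hφ a),
    funext fun b => ?_⟩
  show (∑ a, g a • φ a) (b : X) = g b
  simp only [Finset.sum_apply, Pi.smul_apply, smul_eq_mul]
  rw [Fintype.sum_eq_single b fun a hab => by rw [hφb a b (Ne.symm hab), mul_zero], hφa,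
    mul_one]

end IsResistanceForm

section Glue

variable {X β : Type*} {S₁ S₂ : Set X}

lemma mem_of_union_eq_univ (hU : S₁ ∪ S₂ = Set.univ) {t : X} (ht : t ∉ S₁) : t ∈ S₂ :=
  ((hU ▸ Set.mem_univ t : t ∈ S₁ ∪ S₂)).resolve_left ht

noncomputable def glue (hU : S₁ ∪ S₂ = Set.univ) (f₁ : S₁ → β) (f₂ : S₂ → β) (t : X) : β :=
  if ht : t ∈ S₁ then f₁ ⟨t, ht⟩ else f₂ ⟨t, mem_of_union_eq_univ hU ht⟩

lemma restrict_glue_left (hU : S₁ ∪ S₂ = Set.univ) (f₁ : S₁ → β) (f₂ : S₂ → β) :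
    S₁.restrict (glue hU f₁ f₂) = f₁ :=
  funext fun s => dif_pos s.2

lemma restrict_glue_right (hU : S₁ ∪ S₂ = Set.univ) {f₁ : S₁ → β} {f₂ : S₂ → β}
    (hagree : ∀ t (ht₁ : t ∈ S₁) (ht₂ : t ∈ S₂), f₁ ⟨t, ht₁⟩ = f₂ ⟨t, ht₂⟩) :
    S₂.restrict (glue hU f₁ f₂) = f₂ := by
  funext s
  by_cases hs : (s : X) ∈ S₁
  · exact (dif_pos hs).trans (hagree s hs s.2)
  · exact dif_neg hs

end Glue

section Inclusion

variable {X : Type*} {S A : Set X} {A' : Set S}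

def inclusionOfMemIff (hA' : ∀ s : S, s ∈ A' ↔ (s : X) ∈ A) (a : A') : A :=
  ⟨a.1.1, (hA' a.1).mp a.2⟩

lemma inclusionOfMemIff_injective (hA' : ∀ s : S, s ∈ A' ↔ (s : X) ∈ A) :
    Function.Injective (inclusionOfMemIff hA') :=
  fun _ _ hab => Subtype.ext <| Subtype.ext <| (congrArg Subtype.val hab :)

lemma notMem_range_inclusionOfMemIff (hA' : ∀ s : S, s ∈ A' ↔ (s : X) ∈ A) {x : A}
    (hx : (x : X) ∉ S) : x ∉ Set.range (inclusionOfMemIff hA') := by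
  rintro ⟨a, rfl⟩
  exact hx a.1.2

end Inclusion

section Trace

open scoped Pointwise

variable {X : Type*}

def extensionEnergies (En : (X → ℝ) → (X → ℝ) → ℝ) (Dom : Set (X → ℝ)) (A : Set X)
    (g : A → ℝ) : Set ℝ :=
  {e | ∃ f ∈ Dom, A.restrict f = g ∧ En f f = e}

variable {En : (X → ℝ) → (X → ℝ) → ℝ} {Dom : Set (X → ℝ)}

lemma traceEnergy_eq_sInf (A : Set X) (g : A → ℝ) :
    traceEnergy En Dom A g = sInf (extensionEnergies En Dom A g) := rfl

lemma IsResistanceForm.extensionEnergies_nonempty (h : IsResistanceForm X En Dom) (A : Set X)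
    [Finite A] (g : A → ℝ) : (extensionEnergies En Dom A g).Nonempty :=
  let ⟨f, hf, hfA⟩ := h.exists_restrict_eq A g
  ⟨En f f, f, hf, hfA, rfl⟩

lemma IsResistanceForm.bddBelow_extensionEnergies (h : IsResistanceForm X En Dom) (A : Set X)
    (g : A → ℝ) : BddBelow (extensionEnergies En Dom A g) :=
  ⟨0, by rintro _ ⟨f, hf, -, rfl⟩; exact h.nonneg hf⟩

variable {S₁ S₂ : Set X}
  {En₁ : (S₁ → ℝ) → (S₁ → ℝ) → ℝ} {Dom₁ : Set (S₁ → ℝ)}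
  {En₂ : (S₂ → ℝ) → (S₂ → ℝ) → ℝ} {Dom₂ : Set (S₂ → ℝ)}
  {A : Set X} {A₁ : Set S₁} {A₂ : Set S₂}

lemma extensionEnergies_glue (hU : S₁ ∪ S₂ = Set.univ)
    (hDom : Dom = {f : X → ℝ | S₁.restrict f ∈ Dom₁ ∧ S₂.restrict f ∈ Dom₂})
    (hEn : ∀ f, En f f = En₁ (S₁.restrict f) (S₁.restrict f) + En₂ (S₂.restrict f) (S₂.restrict f))
    (hsub : S₁ ∩ S₂ ⊆ A) (hA₁ : ∀ s : S₁, s ∈ A₁ ↔ (s : X) ∈ A)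
    (hA₂ : ∀ s : S₂, s ∈ A₂ ↔ (s : X) ∈ A) (g : A → ℝ) :
    extensionEnergies En Dom A g =
      extensionEnergies En₁ Dom₁ A₁ (g ∘ inclusionOfMemIff hA₁) +
        extensionEnergies En₂ Dom₂ A₂ (g ∘ inclusionOfMemIff hA₂) := by
  ext e
  constructor
  · rintro ⟨f, hf, rfl, rfl⟩
    rw [hDom] at hf
    exact ⟨_, ⟨_, hf.1, rfl, rfl⟩, _, ⟨_, hf.2, rfl, rfl⟩, (hEn f).symm⟩
  · rintro ⟨_, ⟨f₁, hf₁, hgf₁, rfl⟩, _, ⟨f₂, hf₂, hgf₂, rfl⟩, rfl⟩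
    have hagree : ∀ t (ht₁ : t ∈ S₁) (ht₂ : t ∈ S₂), f₁ ⟨t, ht₁⟩ = f₂ ⟨t, ht₂⟩ :=
      fun t ht₁ ht₂ => (congrFun hgf₁ ⟨⟨t, ht₁⟩, (hA₁ _).mpr (hsub ⟨ht₁, ht₂⟩)⟩).trans
        (congrFun hgf₂ ⟨⟨t, ht₂⟩, (hA₂ _).mpr (hsub ⟨ht₁, ht₂⟩)⟩).symm
    have h₁ := restrict_glue_left hU f₁ f₂
    have h₂ := restrict_glue_right hU hagree
    refine ⟨glue hU f₁ f₂, by rw [hDom, Set.mem_setOf_eq, h₁, h₂]; exact ⟨hf₁, hf₂⟩,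
      funext fun a => ?_, by rw [hEn, h₁, h₂]⟩
    by_cases ha : (a : X) ∈ S₁
    · exact (congrFun h₁ ⟨a, ha⟩).trans (congrFun hgf₁ ⟨⟨a, ha⟩, (hA₁ _).mpr a.2⟩)
    · have ha₂ := mem_of_union_eq_univ hU ha
      exact (congrFun h₂ ⟨a, ha₂⟩).trans (congrFun hgf₂ ⟨⟨a, ha₂⟩, (hA₂ _).mpr a.2⟩)

lemma traceEnergy_glue (hU : S₁ ∪ S₂ = Set.univ)
    (h₁ : IsResistanceForm S₁ En₁ Dom₁) (h₂ : IsResistanceForm S₂ En₂ Dom₂)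
    (hDom : Dom = {f : X → ℝ | S₁.restrict f ∈ Dom₁ ∧ S₂.restrict f ∈ Dom₂})
    (hEn : ∀ f, En f f = En₁ (S₁.restrict f) (S₁.restrict f) + En₂ (S₂.restrict f) (S₂.restrict f))
    (hsub : S₁ ∩ S₂ ⊆ A) [Finite A₁] (hA₁ : ∀ s : S₁, s ∈ A₁ ↔ (s : X) ∈ A)
    [Finite A₂] (hA₂ : ∀ s : S₂, s ∈ A₂ ↔ (s : X) ∈ A) (g : A → ℝ) :
    traceEnergy En Dom A g =
      traceEnergy En₁ Dom₁ A₁ (g ∘ inclusionOfMemIff hA₁) +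
        traceEnergy En₂ Dom₂ A₂ (g ∘ inclusionOfMemIff hA₂) := by
  rw [traceEnergy_eq_sInf, extensionEnergies_glue hU hDom hEn hsub hA₁ hA₂]
  exact csInf_add (h₁.extensionEnergies_nonempty _ _) (h₁.bddBelow_extensionEnergies _ _)
    (h₂.extensionEnergies_nonempty _ _) (h₂.bddBelow_extensionEnergies _ _)

end Trace

section GraphEnergy

variable {V : Type*} [Fintype V]

noncomputable def graphEnergy (w : V → V → ℝ) (g : V → ℝ) : ℝ :=
  (1 / 2) * ∑ x, ∑ y, w x y * (g x - g y) ^ 2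

noncomputable def graphForm (w : V → V → ℝ) (f g : V → ℝ) : ℝ :=
  (1 / 2) * ∑ x, ∑ y, w x y * (f x - f y) * (g x - g y)

lemma graphEnergy_add (w : V → V → ℝ) (f g : V → ℝ) :
    graphEnergy w (f + g) = graphEnergy w f + graphEnergy w g + 2 * graphForm w f g := by
  simp only [graphEnergy, graphForm, Finset.mul_sum, ← Finset.sum_add_distrib]
  refine Finset.sum_congr rfl fun x _ => Finset.sum_congr rfl fun y _ => ?_
  simp only [Pi.add_apply]
  ring

lemma graphForm_zero_left (w : V → V → ℝ) (g : V → ℝ) : graphForm w 0 g = 0 := by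
  simp [graphForm]

lemma graphForm_zero_right (w : V → V → ℝ) (f : V → ℝ) : graphForm w f 0 = 0 := by
  simp [graphForm]

lemma graphForm_single_single_of_ne [DecidableEq V] {w : V → V → ℝ} (hw : IsConductance w)
    {a b : V} (hab : a ≠ b) : graphForm w (Pi.single a 1) (Pi.single b 1) = -w a b := by
  simp only [graphForm, one_div, Pi.single_apply, mul_sub, mul_ite, mul_one, mul_zero,
    Finset.sum_sub_distrib, Finset.sum_ite_irrel, Finset.sum_const_zero, Finset.sum_ite_eq',
    Finset.mem_univ, ↓reduceIte, hab.symm, sub_zero, hw.2.1 b a, zero_sub, mul_neg]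
  ring

lemma graphForm_eq_of_graphEnergy_eq {V₁ V₂ : Type*} [Fintype V₁] [Fintype V₂]
    {w : V → V → ℝ} {w₁ : V₁ → V₁ → ℝ} {w₂ : V₂ → V₂ → ℝ} {ι₁ : V₁ → V} {ι₂ : V₂ → V}
    (h : ∀ g, graphEnergy w g = graphEnergy w₁ (g ∘ ι₁) + graphEnergy w₂ (g ∘ ι₂))
    (f g : V → ℝ) :
    graphForm w f g = graphForm w₁ (f ∘ ι₁) (g ∘ ι₁) + graphForm w₂ (f ∘ ι₂) (g ∘ ι₂) := by
  have hfg : graphEnergy w (f + g) =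
      graphEnergy w₁ (f ∘ ι₁ + g ∘ ι₁) + graphEnergy w₂ (f ∘ ι₂ + g ∘ ι₂) := h (f + g)
  rw [graphEnergy_add, graphEnergy_add, graphEnergy_add, h f, h g] at hfg
  linarith

end GraphEnergy

section Restriction

variable {X : Type*} {S A : Set X} {A' : Set S}

lemma single_comp_inclusionOfMemIff (hA' : ∀ s : S, s ∈ A' ↔ (s : X) ∈ A) {x : A}
    (hx : (x : X) ∈ S) :
    Pi.single x (1 : ℝ) ∘ inclusionOfMemIff hA' = Pi.single ⟨⟨x, hx⟩, (hA' _).mpr x.2⟩ 1 := by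
  funext a
  simp only [Function.comp_apply, Pi.single_apply, ← (inclusionOfMemIff_injective hA').eq_iff]
  rfl

lemma single_comp_inclusionOfMemIff_of_notMem (hA' : ∀ s : S, s ∈ A' ↔ (s : X) ∈ A) {x : A}
    (hx : (x : X) ∉ S) : Pi.single x (1 : ℝ) ∘ inclusionOfMemIff hA' = 0 :=
  funext fun a => Pi.single_eq_of_ne (fun h => notMem_range_inclusionOfMemIff hA' hx ⟨a, h⟩) 1

variable [Fintype A'] {w : A' → A' → ℝ}

lemma graphForm_single_comp_inclusionOfMemIff (hw : IsConductance w)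
    (hA' : ∀ s : S, s ∈ A' ↔ (s : X) ∈ A) {x y : A} (hxy : x ≠ y) (hx : (x : X) ∈ S)
    (hy : (y : X) ∈ S) :
    graphForm w (Pi.single x 1 ∘ inclusionOfMemIff hA') (Pi.single y 1 ∘ inclusionOfMemIff hA') =
      -w ⟨⟨x, hx⟩, (hA' _).mpr x.2⟩ ⟨⟨y, hy⟩, (hA' _).mpr y.2⟩ := by
  rw [single_comp_inclusionOfMemIff hA' hx, single_comp_inclusionOfMemIff hA' hy,
    graphForm_single_single_of_ne hw fun h =>
      hxy (Subtype.ext (congrArg (fun a : A' => a.1.1) h))]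

lemma graphForm_single_comp_inclusionOfMemIff_of_not_and (w : A' → A' → ℝ)
    (hA' : ∀ s : S, s ∈ A' ↔ (s : X) ∈ A) {x y : A} (hxy : ¬((x : X) ∈ S ∧ (y : X) ∈ S)) :
    graphForm w (Pi.single x 1 ∘ inclusionOfMemIff hA') (Pi.single y 1 ∘ inclusionOfMemIff hA') =
      0 := by
  rcases not_and_or.mp hxy with hx | hy
  · rw [single_comp_inclusionOfMemIff_of_notMem hA' hx, graphForm_zero_left]
  · rw [single_comp_inclusionOfMemIff_of_notMem hA' hy, graphForm_zero_right]

end Restriction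

theorem trace_weights_glue_general {F : Type*} (S₁ S₂ : Set F)
    (hUnion : S₁ ∪ S₂ = Set.univ)
    (En₁ : (↥S₁ → ℝ) → (↥S₁ → ℝ) → ℝ) (Dom₁ : Set (↥S₁ → ℝ))
    (En₂ : (↥S₂ → ℝ) → (↥S₂ → ℝ) → ℝ) (Dom₂ : Set (↥S₂ → ℝ))
    (h₁ : IsResistanceForm ↥S₁ En₁ Dom₁)
    (h₂ : IsResistanceForm ↥S₂ En₂ Dom₂)
    (En : (F → ℝ) → (F → ℝ) → ℝ) (Dom : Set (F → ℝ))
    (hDom : Dom = {f : F → ℝ | S₁.restrict f ∈ Dom₁ ∧ S₂.restrict f ∈ Dom₂})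
    (hEn : ∀ f g : F → ℝ,
      En f g = En₁ (S₁.restrict f) (S₁.restrict g) + En₂ (S₂.restrict f) (S₂.restrict g))
    (A : Set F) [Fintype ↥A] (hsub : S₁ ∩ S₂ ⊆ A)
    (A₁ : Set ↥S₁) [Fintype ↥A₁] (hA₁ : ∀ s : ↥S₁, s ∈ A₁ ↔ (s : F) ∈ A)
    (A₂ : Set ↥S₂) [Fintype ↥A₂] (hA₂ : ∀ s : ↥S₂, s ∈ A₂ ↔ (s : F) ∈ A)
    (wA : ↥A → ↥A → ℝ) (hwA : IsConductance wA)
    (hwAen : ∀ g : ↥A → ℝ,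
      (1 / 2) * ∑ x, ∑ y, wA x y * (g x - g y) ^ 2 = traceEnergy En Dom A g)
    (wA₁ : ↥A₁ → ↥A₁ → ℝ) (hwA₁ : IsConductance wA₁)
    (hwA₁en : ∀ g : ↥A₁ → ℝ,
      (1 / 2) * ∑ x, ∑ y, wA₁ x y * (g x - g y) ^ 2 = traceEnergy En₁ Dom₁ A₁ g)
    (wA₂ : ↥A₂ → ↥A₂ → ℝ) (hwA₂ : IsConductance wA₂)
    (hwA₂en : ∀ g : ↥A₂ → ℝ,
      (1 / 2) * ∑ x, ∑ y, wA₂ x y * (g x - g y) ^ 2 = traceEnergy En₂ Dom₂ A₂ g) :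
    ∀ x y : ↥A,
      (∀ (hx1 : (x : F) ∈ S₁) (hx2 : (x : F) ∈ S₂) (hy1 : (y : F) ∈ S₁) (hy2 : (y : F) ∈ S₂),
        wA x y =
          wA₁ ⟨⟨(x : F), hx1⟩, (hA₁ ⟨(x : F), hx1⟩).mpr x.2⟩
              ⟨⟨(y : F), hy1⟩, (hA₁ ⟨(y : F), hy1⟩).mpr y.2⟩ +
          wA₂ ⟨⟨(x : F), hx2⟩, (hA₂ ⟨(x : F), hx2⟩).mpr x.2⟩
              ⟨⟨(y : F), hy2⟩, (hA₂ ⟨(y : F), hy2⟩).mpr y.2⟩) ∧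
      (∀ (hx1 : (x : F) ∈ S₁) (hy1 : (y : F) ∈ S₁),
        ¬((x : F) ∈ S₂ ∧ (y : F) ∈ S₂) →
        wA x y =
          wA₁ ⟨⟨(x : F), hx1⟩, (hA₁ ⟨(x : F), hx1⟩).mpr x.2⟩
              ⟨⟨(y : F), hy1⟩, (hA₁ ⟨(y : F), hy1⟩).mpr y.2⟩) ∧
      (∀ (hx2 : (x : F) ∈ S₂) (hy2 : (y : F) ∈ S₂),
        ¬((x : F) ∈ S₁ ∧ (y : F) ∈ S₁) →
        wA x y =
          wA₂ ⟨⟨(x : F), hx2⟩, (hA₂ ⟨(x : F), hx2⟩).mpr x.2⟩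
              ⟨⟨(y : F), hy2⟩, (hA₂ ⟨(y : F), hy2⟩).mpr y.2⟩) ∧
      (¬((x : F) ∈ S₁ ∧ (y : F) ∈ S₁) → ¬((x : F) ∈ S₂ ∧ (y : F) ∈ S₂) →
        wA x y = 0) := by
  intro x y
  have henergy : ∀ g : A → ℝ, graphEnergy wA g =
      graphEnergy wA₁ (g ∘ inclusionOfMemIff hA₁) + graphEnergy wA₂ (g ∘ inclusionOfMemIff hA₂) :=
    fun g => by
      rw [graphEnergy, graphEnergy, graphEnergy, hwAen, hwA₁en, hwA₂en]
      exact traceEnergy_glue hUnion h₁ h₂ hDom (fun f => hEn f f) hsub hA₁ hA₂ g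
  have hform := graphForm_eq_of_graphEnergy_eq henergy (Pi.single x 1) (Pi.single y 1)
  rcases eq_or_ne x y with rfl | hxy
  · exact ⟨fun _ _ _ _ => by rw [hwA.2.2, hwA₁.2.2, hwA₂.2.2, add_zero],
      fun _ _ _ => by rw [hwA.2.2, hwA₁.2.2], fun _ _ _ => by rw [hwA.2.2, hwA₂.2.2],
      fun _ _ => hwA.2.2 x⟩
  rw [graphForm_single_single_of_ne hwA hxy] at hform
  refine ⟨fun hx₁ hx₂ hy₁ hy₂ => ?_, fun hx₁ hy₁ hxy₂ => ?_, fun hx₂ hy₂ hxy₁ => ?_,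
    fun hxy₁ hxy₂ => ?_⟩
  · rw [graphForm_single_comp_inclusionOfMemIff hwA₁ hA₁ hxy hx₁ hy₁,
      graphForm_single_comp_inclusionOfMemIff hwA₂ hA₂ hxy hx₂ hy₂] at hform
    linarith
  · rw [graphForm_single_comp_inclusionOfMemIff hwA₁ hA₁ hxy hx₁ hy₁,
      graphForm_single_comp_inclusionOfMemIff_of_not_and wA₂ hA₂ hxy₂] at hform
    linarith
  · rw [graphForm_single_comp_inclusionOfMemIff_of_not_and wA₁ hA₁ hxy₁,
      graphForm_single_comp_inclusionOfMemIff hwA₂ hA₂ hxy hx₂ hy₂] at hform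
    linarith
  · rw [graphForm_single_comp_inclusionOfMemIff_of_not_and wA₁ hA₁ hxy₁,
      graphForm_single_comp_inclusionOfMemIff_of_not_and wA₂ hA₂ hxy₂] at hform
    linarith

/-- Let `(En, Dom)` be the glued resistance form on `F₁ ∪ F₂` of resistance forms on `F₁, F₂`
with nonempty finite intersection.  Let `A ⊇ F₁ ∩ F₂` be finite, `A_i = A ∩ F_i`, and let
`wA`, `wA₁`, `wA₂` be conductance functions whose graph energies realize the traces
`En|_A`, `En₁|_{A₁}`, `En₂|_{A₂}`.  Then `wA` decomposes: it is `wA₁ + wA₂` on pairs in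
`F₁ ∩ F₂`, agrees with `wA₁` (resp. `wA₂`) on other pairs inside `F₁` (resp. `F₂`), and
vanishes on pairs not contained in either. -/
theorem trace_weights_glue {F : Type*} (S₁ S₂ : Set F)
    (hUnion : S₁ ∪ S₂ = Set.univ)
    (hFin : (S₁ ∩ S₂).Finite) (hNe : (S₁ ∩ S₂).Nonempty)
    (En₁ : (↥S₁ → ℝ) → (↥S₁ → ℝ) → ℝ) (Dom₁ : Set (↥S₁ → ℝ))
    (En₂ : (↥S₂ → ℝ) → (↥S₂ → ℝ) → ℝ) (Dom₂ : Set (↥S₂ → ℝ))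
    (h₁ : IsResistanceForm ↥S₁ En₁ Dom₁)
    (h₂ : IsResistanceForm ↥S₂ En₂ Dom₂)
    (En : (F → ℝ) → (F → ℝ) → ℝ) (Dom : Set (F → ℝ))
    (hDom : Dom = {f : F → ℝ | S₁.restrict f ∈ Dom₁ ∧ S₂.restrict f ∈ Dom₂})
    (hEn : ∀ f g : F → ℝ,
      En f g = En₁ (S₁.restrict f) (S₁.restrict g) + En₂ (S₂.restrict f) (S₂.restrict g))
    (A : Set F) [Fintype ↥A] (hsub : S₁ ∩ S₂ ⊆ A)
    (A₁ : Set ↥S₁) [Fintype ↥A₁] (hA₁ : ∀ s : ↥S₁, s ∈ A₁ ↔ (s : F) ∈ A)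
    (A₂ : Set ↥S₂) [Fintype ↥A₂] (hA₂ : ∀ s : ↥S₂, s ∈ A₂ ↔ (s : F) ∈ A)
    (wA : ↥A → ↥A → ℝ) (hwA : IsConductance wA)
    (hwAen : ∀ g : ↥A → ℝ,
      (1 / 2) * ∑ x, ∑ y, wA x y * (g x - g y) ^ 2 = traceEnergy En Dom A g)
    (wA₁ : ↥A₁ → ↥A₁ → ℝ) (hwA₁ : IsConductance wA₁)
    (hwA₁en : ∀ g : ↥A₁ → ℝ,
      (1 / 2) * ∑ x, ∑ y, wA₁ x y * (g x - g y) ^ 2 = traceEnergy En₁ Dom₁ A₁ g)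
    (wA₂ : ↥A₂ → ↥A₂ → ℝ) (hwA₂ : IsConductance wA₂)
    (hwA₂en : ∀ g : ↥A₂ → ℝ,
      (1 / 2) * ∑ x, ∑ y, wA₂ x y * (g x - g y) ^ 2 = traceEnergy En₂ Dom₂ A₂ g) :
    ∀ x y : ↥A,
      (∀ (hx1 : (x : F) ∈ S₁) (hx2 : (x : F) ∈ S₂) (hy1 : (y : F) ∈ S₁) (hy2 : (y : F) ∈ S₂),
        wA x y =
          wA₁ ⟨⟨(x : F), hx1⟩, (hA₁ ⟨(x : F), hx1⟩).mpr x.2⟩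
              ⟨⟨(y : F), hy1⟩, (hA₁ ⟨(y : F), hy1⟩).mpr y.2⟩ +
          wA₂ ⟨⟨(x : F), hx2⟩, (hA₂ ⟨(x : F), hx2⟩).mpr x.2⟩
              ⟨⟨(y : F), hy2⟩, (hA₂ ⟨(y : F), hy2⟩).mpr y.2⟩) ∧
      (∀ (hx1 : (x : F) ∈ S₁) (hy1 : (y : F) ∈ S₁),
        ¬((x : F) ∈ S₂ ∧ (y : F) ∈ S₂) →
        wA x y =
          wA₁ ⟨⟨(x : F), hx1⟩, (hA₁ ⟨(x : F), hx1⟩).mpr x.2⟩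
              ⟨⟨(y : F), hy1⟩, (hA₁ ⟨(y : F), hy1⟩).mpr y.2⟩) ∧
      (∀ (hx2 : (x : F) ∈ S₂) (hy2 : (y : F) ∈ S₂),
        ¬((x : F) ∈ S₁ ∧ (y : F) ∈ S₁) →
        wA x y =
          wA₂ ⟨⟨(x : F), hx2⟩, (hA₂ ⟨(x : F), hx2⟩).mpr x.2⟩
              ⟨⟨(y : F), hy2⟩, (hA₂ ⟨(y : F), hy2⟩).mpr y.2⟩) ∧
      (¬((x : F) ∈ S₁ ∧ (y : F) ∈ S₁) → ¬((x : F) ∈ S₂ ∧ (y : F) ∈ S₂) →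
        wA x y = 0) :=
  trace_weights_glue_general S₁ S₂ hUnion En₁ Dom₁ En₂ Dom₂ h₁ h₂ En Dom hDom hEn A hsub A₁ hA₁ A₂
    hA₂ wA hwA hwAen wA₁ hwA₁ hwA₁en wA₂ hwA₂ hwA₂en
end
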